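/- Let χ: ℝ⁺ → ℝ be a kernel and let f: ℝ⁺ → ℝ be a bounded log-uniformly continuous function (i.e., for every ε > 0 there exists δ > 0 such that |f(s) − f(t)| < ε whenever |log s − log t| < δ). Then sup_{x∈ℝ⁺} |f(x) − (I_w^χ f)(x)| → 0 as w → ∞. -/

import Mathlib

open Real MeasureTheory Filter Set

/-- The Kantorovich exponential sampling series
`(I_w^χ f)(x) = ∑_{k∈ℤ} χ(e^{−k} x^w) · w ∫_{k/w}^{(k+1)/w} f(e^u) du`. -/
noncomputable def kanto (χ f : ℝ → ℝ) (w x : ℝ) : ℝ :=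
  ∑' k : ℤ, χ (Real.exp (-(k : ℝ)) * x ^ w) *
    (w * ∫ u in ((k : ℝ) / w)..(((k : ℝ) + 1) / w), f (Real.exp u))

/-- The absolute moment of order ν:
`M_ν(χ) = sup_{u∈ℝ⁺} ∑_{k∈ℤ} |χ(e^{−k}u)|·|k − log u|^ν`, valued in `[0,∞]`. -/
noncomputable def absMoment (χ : ℝ → ℝ) (ν : ℝ) : ENNReal :=
  ⨆ u : {x : ℝ // 0 < x}, ∑' k : ℤ,
    ENNReal.ofReal (|χ (Real.exp (-(k : ℝ)) * u.1)| * |(k : ℝ) - Real.log u.1| ^ ν)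

/-- χ : ℝ⁺ → ℝ is a kernel: (i) integrable on ℝ⁺ and bounded on [1/e, e];
(ii) ∑_{k∈ℤ} χ(e^{−k}u) = 1 for all u > 0; (iii) M_ν(χ) < ∞ for some ν > 0. -/
structure IsKernel (χ : ℝ → ℝ) : Prop where
  integrable : IntegrableOn χ (Ioi 0)
  bounded : ∃ C, ∀ u ∈ Icc (Real.exp (-1)) (Real.exp 1), |χ u| ≤ C
  partition : ∀ u : ℝ, 0 < u → HasSum (fun k : ℤ => χ (Real.exp (-(k : ℝ)) * u)) 1
  moment : ∃ ν > 0, absMoment χ ν < ⊤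

/-- `ψ_χ⁻(u) = ∑_{k > log u} χ(u e^{−k})`. -/
noncomputable def psiMinus (χ : ℝ → ℝ) (u : ℝ) : ℝ :=
  ∑' k : {k : ℤ // Real.log u < (k : ℝ)}, χ (u * Real.exp (-(k.1 : ℝ)))

/-- `ψ_χ⁺(u) = ∑_{k < log u} χ(u e^{−k})`. -/
noncomputable def psiPlus (χ : ℝ → ℝ) (u : ℝ) : ℝ :=
  ∑' k : {k : ℤ // (k : ℝ) < Real.log u}, χ (u * Real.exp (-(k.1 : ℝ)))

lemma aux_le_moment (χ : ℝ → ℝ) (ν : ℝ) {u : ℝ} (hu : 0 < u) :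
    (∑' k : ℤ, ENNReal.ofReal (|χ (Real.exp (-(k : ℝ)) * u)| * |(k : ℝ) - Real.log u| ^ ν))
      ≤ absMoment χ ν :=
  le_iSup (fun v : {x : ℝ // 0 < x} => ∑' k : ℤ,
    ENNReal.ofReal (|χ (Real.exp (-(k : ℝ)) * v.1)| * |(k : ℝ) - Real.log v.1| ^ ν)) ⟨u, hu⟩

lemma moment_summable (χ : ℝ → ℝ) (ν : ℝ) (hM : absMoment χ ν ≠ ⊤) {u : ℝ} (hu : 0 < u) :
    Summable (fun k : ℤ => |χ (Real.exp (-(k : ℝ)) * u)| * |(k : ℝ) - Real.log u| ^ ν) := by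
  have hg : ∀ k : ℤ, 0 ≤ |χ (Real.exp (-(k : ℝ)) * u)| * |(k : ℝ) - Real.log u| ^ ν :=
    fun k => mul_nonneg (abs_nonneg _) (Real.rpow_nonneg (abs_nonneg _) _)
  have hne : (∑' k : ℤ, ENNReal.ofReal
      (|χ (Real.exp (-(k : ℝ)) * u)| * |(k : ℝ) - Real.log u| ^ ν)) ≠ ⊤ :=
    ((aux_le_moment χ ν hu).trans_lt (lt_top_iff_ne_top.mpr hM)).ne
  exact (ENNReal.summable_toReal hne).congr fun k => ENNReal.toReal_ofReal (hg k)

lemma moment_tsum_le (χ : ℝ → ℝ) (ν : ℝ) (hM : absMoment χ ν ≠ ⊤) {u : ℝ} (hu : 0 < u) :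
    (∑' k : ℤ, |χ (Real.exp (-(k : ℝ)) * u)| * |(k : ℝ) - Real.log u| ^ ν)
      ≤ (absMoment χ ν).toReal := by
  have hg : ∀ k : ℤ, 0 ≤ |χ (Real.exp (-(k : ℝ)) * u)| * |(k : ℝ) - Real.log u| ^ ν :=
    fun k => mul_nonneg (abs_nonneg _) (Real.rpow_nonneg (abs_nonneg _) _)
  have hs := moment_summable χ ν hM hu
  have h1 := ENNReal.ofReal_tsum_of_nonneg hg hs
  have h2 := ENNReal.toReal_mono hM ((h1 ▸ aux_le_moment χ ν hu))
  rwa [ENNReal.toReal_ofReal (tsum_nonneg hg)] at h2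

lemma chi_summable (χ : ℝ → ℝ) (ν : ℝ) (hν : 0 < ν) (hM : absMoment χ ν ≠ ⊤)
    {C : ℝ} (hC0 : 0 ≤ C)
    (hC : ∀ v ∈ Icc (Real.exp (-1)) (Real.exp 1), |χ v| ≤ C) {u : ℝ} (hu : 0 < u) :
    Summable (fun k : ℤ => |χ (Real.exp (-(k : ℝ)) * u)|) ∧
      (∑' k : ℤ, |χ (Real.exp (-(k : ℝ)) * u)|) ≤ 2 * C + (absMoment χ ν).toReal := by
  classical
  set g := fun k : ℤ => |χ (Real.exp (-(k : ℝ)) * u)| * |(k : ℝ) - Real.log u| ^ ν with hgdef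
  have hgsum := moment_summable χ ν hM hu
  set n : ℤ := ⌊Real.log u⌋ with hn
  set h := fun k : ℤ => (if k = n then C else 0) + ((if k = n + 1 then C else 0) + g k) with hh
  have hhsum : Summable h := by
    apply Summable.add (summable_of_ne_finset_zero (s := {n}) ?_)
      (Summable.add (summable_of_ne_finset_zero (s := {n+1}) ?_) hgsum)
    · intro k hk; simp only [Finset.mem_singleton] at hk; simp [hk]
    · intro k hk; simp only [Finset.mem_singleton] at hk; simp [hk]
  have hle : ∀ k : ℤ, |χ (Real.exp (-(k : ℝ)) * u)| ≤ h k := by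
    intro k
    have hgnn : 0 ≤ g k := mul_nonneg (abs_nonneg _) (Real.rpow_nonneg (abs_nonneg _) _)
    rcases lt_or_ge |(k : ℝ) - Real.log u| 1 with hcase | hcase
    · -- k = n or n+1, χ arg in [1/e, e]
      have hk1 : (k : ℝ) - Real.log u < 1 := (abs_lt.mp hcase).2
      have hk2 : -1 < (k : ℝ) - Real.log u := (abs_lt.mp hcase).1
      have hfl : (n : ℝ) ≤ Real.log u := Int.floor_le _
      have hfl2 : Real.log u < (n : ℝ) + 1 := Int.lt_floor_add_one _
      have hkn : k = n ∨ k = n + 1 := by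
        have h1 : (n : ℝ) - 1 < (k : ℝ) := by linarith
        have h2 : (k : ℝ) < (n : ℝ) + 2 := by linarith
        have h1' : n - 1 < k := by exact_mod_cast h1
        have h2' : k < n + 2 := by exact_mod_cast h2
        omega
      have harg : Real.exp (-(k : ℝ)) * u ∈ Icc (Real.exp (-1)) (Real.exp 1) := by
        have : Real.exp (-(k : ℝ)) * u = Real.exp (Real.log u - (k : ℝ)) := by
          rw [Real.exp_sub, ← Real.exp_log hu]
          ring_nf
          rw [Real.exp_neg]
          field_simp
          rw [Real.log_exp]
        rw [this]
        constructor
        · exact Real.exp_le_exp.mpr (by linarith)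
        · exact Real.exp_le_exp.mpr (by linarith)
      have := hC _ harg
      rcases hkn with rfl | rfl
      · simp only [hh, if_true]
        rw [if_neg (by omega : ¬ n = n + 1)]
        linarith [hgnn, hC _ harg]
      · simp only [hh, if_true]
        rw [if_neg (by omega : ¬ n + 1 = n)]
        linarith [hgnn, hC _ harg]
    · -- |k - log u| ≥ 1
      have h1 : (1:ℝ) ≤ |(k : ℝ) - Real.log u| ^ ν := by
        calc (1:ℝ) = 1 ^ ν := (Real.one_rpow ν).symm
        _ ≤ |(k : ℝ) - Real.log u| ^ ν := Real.rpow_le_rpow zero_le_one hcase hν.le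
      have hg' : |χ (Real.exp (-(k : ℝ)) * u)| ≤ g k := by
        have := mul_le_mul_of_nonneg_left h1 (abs_nonneg (χ (Real.exp (-(k : ℝ)) * u)))
        simpa [hgdef] using this
      refine hg'.trans ?_
      simp only [hh]
      have h2 : (0:ℝ) ≤ (if k = n then C else 0) := by split <;> simp [hC0]
      have h3 : (0:ℝ) ≤ (if k = n + 1 then C else 0) := by split <;> simp [hC0]
      linarith
  have hsum : Summable (fun k : ℤ => |χ (Real.exp (-(k : ℝ)) * u)|) :=
    Summable.of_nonneg_of_le (fun k => abs_nonneg _) hle hhsum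
  refine ⟨hsum, ?_⟩
  have := Summable.tsum_le_tsum hle hsum hhsum
  refine this.trans ?_
  rw [Summable.tsum_add (summable_of_ne_finset_zero (s := {n}) ?_)
      (Summable.add (summable_of_ne_finset_zero (s := {n+1}) ?_) hgsum),
    Summable.tsum_add (summable_of_ne_finset_zero (s := {n+1}) ?_) hgsum, tsum_ite_eq, tsum_ite_eq]
  · have := moment_tsum_le χ ν hM hu
    linarith
  all_goals (intro k hk; simp only [Finset.mem_singleton] at hk; simp [hk])

lemma luc_cont (f : ℝ → ℝ)
    (hluc : ∀ ε > 0, ∃ δ > 0, ∀ s > 0, ∀ t > 0,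
      |Real.log s - Real.log t| < δ → |f s - f t| < ε) :
    Continuous (fun u : ℝ => f (Real.exp u)) := by
  have : UniformContinuous (fun u : ℝ => f (Real.exp u)) := by
    rw [Metric.uniformContinuous_iff]
    intro ε hε
    obtain ⟨δ, hδ, h⟩ := hluc ε hε
    refine ⟨δ, hδ, fun {a b} hab => ?_⟩
    have := h (Real.exp a) (Real.exp_pos a) (Real.exp b) (Real.exp_pos b)
      (by simpa [Real.log_exp, Real.dist_eq] using hab)
    simpa [Real.dist_eq] using this
  exact this.continuous

lemma integral_diff_bound (f : ℝ → ℝ) (hfc : Continuous fun u : ℝ => f (Real.exp u))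
    {x w B : ℝ} (hw : 0 < w) (k : ℤ)
    (hB : ∀ u ∈ Set.Icc ((k : ℝ) / w) (((k : ℝ) + 1) / w), |f x - f (Real.exp u)| ≤ B) :
    |f x - w * ∫ u in ((k : ℝ) / w)..(((k : ℝ) + 1) / w), f (Real.exp u)| ≤ B := by
  set a := (k : ℝ) / w with ha
  set b := ((k : ℝ) + 1) / w with hb
  have hab : a ≤ b := by rw [ha, hb]; gcongr; linarith
  have hba : b - a = 1 / w := by rw [ha, hb]; field_simp; ring
  have hint : IntervalIntegrable (fun u : ℝ => f (Real.exp u)) volume a b :=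
    hfc.intervalIntegrable a b
  have hsub : (∫ u in a..b, (f x - f (Real.exp u))) =
      (∫ _u in a..b, f x) - ∫ u in a..b, f (Real.exp u) :=
    intervalIntegral.integral_sub intervalIntegrable_const hint
  have hconst : (∫ _u in a..b, f x) = (b - a) * f x := by
    rw [intervalIntegral.integral_const, smul_eq_mul]
  have key : f x - w * ∫ u in a..b, f (Real.exp u)
      = w * ∫ u in a..b, (f x - f (Real.exp u)) := by
    rw [hsub, hconst, hba]
    have hw' : w ≠ 0 := hw.ne'
    field_simp
  rw [key, abs_mul, abs_of_pos hw]
  have hnorm : |∫ u in a..b, (f x - f (Real.exp u))| ≤ B * |b - a| := by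
    rw [← Real.norm_eq_abs]
    apply intervalIntegral.norm_integral_le_of_norm_le_const
    intro u hu
    have : u ∈ Set.Icc a b := by
      rw [Set.uIoc_of_le hab] at hu; exact Set.Ioc_subset_Icc_self hu
    rw [Real.norm_eq_abs]
    exact hB u this
  rw [hba] at hnorm
  have : |(1:ℝ) / w| = 1 / w := abs_of_pos (by positivity)
  rw [this] at hnorm
  calc w * |∫ u in a..b, (f x - f (Real.exp u))| ≤ w * (B * (1 / w)) :=
        mul_le_mul_of_nonneg_left hnorm hw.le
    _ = B := by field_simp

/-- Uniform convergence of `I_w^χ f` for bounded log-uniformly continuous `f`: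
`sup_{x>0} |f(x) − (I_w^χ f)(x)| → 0` as `w → ∞`. -/
theorem kanto_tendsto_uniformly
    (χ f : ℝ → ℝ) (hχ : IsKernel χ)
    (hfb : ∃ C, ∀ x : ℝ, 0 < x → |f x| ≤ C)
    (hluc : ∀ ε > 0, ∃ δ > 0, ∀ s > 0, ∀ t > 0,
      |Real.log s - Real.log t| < δ → |f s - f t| < ε) :
    ∀ ε > 0, ∃ W : ℝ, ∀ w ≥ W, ∀ x > 0, |f x - kanto χ f w x| ≤ ε := by

  obtain ⟨ν, hν, hMlt⟩ := hχ.moment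
  have hM : absMoment χ ν ≠ ⊤ := hMlt.ne
  set Mν := (absMoment χ ν).toReal with hMν
  have hMν0 : 0 ≤ Mν := ENNReal.toReal_nonneg
  obtain ⟨C₀, hC₀⟩ := hχ.bounded
  set C := max C₀ 0 with hC
  have hC0 : 0 ≤ C := le_max_right _ _
  have hCb : ∀ v ∈ Icc (Real.exp (-1)) (Real.exp 1), |χ v| ≤ C :=
    fun v hv => (hC₀ v hv).trans (le_max_left _ _)
  obtain ⟨Cf₀, hCf₀⟩ := hfb
  set Cf := max Cf₀ 0 with hCf
  have hCf0 : 0 ≤ Cf := le_max_right _ _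
  have hCfb : ∀ y : ℝ, 0 < y → |f y| ≤ Cf := fun y hy => (hCf₀ y hy).trans (le_max_left _ _)
  have hfc := luc_cont f hluc
  set M₀ := 2 * C + Mν with hM₀
  have hM₀0 : 0 ≤ M₀ := by positivity
  intro ε hε
  set ε' := ε / (2 * (M₀ + 1)) with hε'def
  have hε' : 0 < ε' := by positivity
  obtain ⟨δ, hδ, hδ'⟩ := hluc ε' hε'
  set A := max (2 * (2 * Cf * Mν + 1) / ε) 1 with hA
  have hA1 : (1:ℝ) ≤ A := le_max_right _ _
  have hA0 : (0:ℝ) < A := lt_of_lt_of_le one_pos hA1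
  refine ⟨max (2 / δ + 1) (A ^ (1/ν) / (δ/2)), fun w hw x hx => ?_⟩
  have hw1 : 2 / δ + 1 ≤ w := le_trans (le_max_left _ _) hw
  have hw0 : 0 < w := lt_of_lt_of_le (by positivity) hw1
  have hw2 : 2 / δ < w := by linarith
  have hwδ : A ^ (1/ν) ≤ w * (δ/2) := by
    have h := le_trans (le_max_right _ _) hw
    rw [div_le_iff₀ (by positivity : (0:ℝ) < δ/2)] at h
    linarith
  set u₀ := x ^ w with hu₀def
  have hu₀ : 0 < u₀ := Real.rpow_pos_of_pos hx w
  have hlogu : Real.log u₀ = w * Real.log x := Real.log_rpow hx w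
  set g := fun k : ℤ => |χ (Real.exp (-(k:ℝ)) * u₀)| * |(k:ℝ) - Real.log u₀| ^ ν with hg
  set X := fun k : ℤ => |χ (Real.exp (-(k:ℝ)) * u₀)| with hX
  have hgnn : ∀ k, 0 ≤ g k := fun k => mul_nonneg (abs_nonneg _) (Real.rpow_nonneg (abs_nonneg _) _)
  have hgsum : Summable g := moment_summable χ ν hM hu₀
  have hgle : ∑' k, g k ≤ Mν := moment_tsum_le χ ν hM hu₀
  have hXpair := chi_summable χ ν hν hM hC0 hCb hu₀
  have hXsum : Summable X := hXpair.1
  have hXle : ∑' k, X k ≤ M₀ := hXpair.2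
  set A' := (w * (δ/2)) ^ ν with hA'
  have hA'pos : 0 < A' := Real.rpow_pos_of_pos (by positivity) ν
  have hAA' : A ≤ A' := by
    calc A = (A ^ (1/ν)) ^ ν := by
          rw [← Real.rpow_mul hA0.le, one_div_mul_cancel hν.ne', Real.rpow_one]
      _ ≤ A' := Real.rpow_le_rpow (Real.rpow_nonneg hA0.le _) hwδ hν.le
  set I := fun k : ℤ => w * ∫ u in ((k:ℝ)/w)..(((k:ℝ)+1)/w), f (Real.exp u) with hI
  have hI2 : ∀ k : ℤ, |f x - I k| ≤ 2 * Cf := by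
    intro k
    apply integral_diff_bound f hfc hw0 k
    intro u _
    calc |f x - f (Real.exp u)| ≤ |f x| + |f (Real.exp u)| := abs_sub _ _
      _ ≤ 2 * Cf := by linarith [hCfb x hx, hCfb (Real.exp u) (Real.exp_pos u)]
  have hkey : ∀ k : ℤ, |χ (Real.exp (-(k:ℝ)) * u₀) * (f x - I k)| ≤
      ε' * X k + (2 * Cf / A') * g k := by
    intro k
    rw [abs_mul]
    rcases le_or_gt |(k:ℝ) - Real.log u₀| (w * (δ/2)) with hnear | hfar
    · have hIk : |f x - I k| ≤ ε' := by
        apply integral_diff_bound f hfc hw0 k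
        intro u hu
        have e1 : |(k:ℝ)/w - Real.log x| ≤ δ/2 := by
          have heq : (k:ℝ)/w - Real.log x = ((k:ℝ) - w * Real.log x)/w := by field_simp
          rw [heq, abs_div, abs_of_pos hw0, div_le_iff₀ hw0]
          rw [hlogu] at hnear
          linarith
        have e2 : u - (k:ℝ)/w ≤ 1/w := by
          have : ((k:ℝ)+1)/w = (k:ℝ)/w + 1/w := add_div _ _ _
          rw [this] at hu
          linarith [hu.2]
        have e3 : (1:ℝ)/w < δ/2 := by
          rw [div_lt_div_iff₀ hw0 two_pos]
          rw [div_lt_iff₀ hδ] at hw2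
          linarith
        have hd : |Real.log (Real.exp u) - Real.log x| < δ := by
          rw [Real.log_exp]
          calc |u - Real.log x| ≤ |u - (k:ℝ)/w| + |(k:ℝ)/w - Real.log x| := abs_sub_le _ _ _
            _ < δ := by
                rw [abs_of_nonneg (by linarith [hu.1] : (0:ℝ) ≤ u - (k:ℝ)/w)]
                linarith
        have := hδ' (Real.exp u) (Real.exp_pos u) x hx hd
        rw [abs_sub_comm] at this
        exact this.le
      calc |χ (Real.exp (-(k:ℝ)) * u₀)| * |f x - I k| ≤ |χ (Real.exp (-(k:ℝ)) * u₀)| * ε' :=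
            mul_le_mul_of_nonneg_left hIk (abs_nonneg _)
        _ = ε' * X k := mul_comm _ _
        _ ≤ ε' * X k + (2 * Cf / A') * g k :=
            le_add_of_nonneg_right (mul_nonneg (by positivity) (hgnn k))
    · have hA'le : A' ≤ |(k:ℝ) - Real.log u₀| ^ ν :=
        Real.rpow_le_rpow (by positivity) hfar.le hν.le
      calc |χ (Real.exp (-(k:ℝ)) * u₀)| * |f x - I k|
          ≤ |χ (Real.exp (-(k:ℝ)) * u₀)| * (2 * Cf) :=
            mul_le_mul_of_nonneg_left (hI2 k) (abs_nonneg _)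
        _ ≤ (2 * Cf / A') * g k := by
            have heq : |χ (Real.exp (-(k:ℝ)) * u₀)| * (2 * Cf)
                = (2 * Cf / A') * (|χ (Real.exp (-(k:ℝ)) * u₀)| * A') := by
              field_simp
            rw [heq]
            exact mul_le_mul_of_nonneg_left
              (mul_le_mul_of_nonneg_left hA'le (abs_nonneg _)) (by positivity)
        _ ≤ ε' * X k + (2 * Cf / A') * g k :=
            le_add_of_nonneg_left (mul_nonneg hε'.le (abs_nonneg _))
  have hrhs_sum : Summable (fun k : ℤ => ε' * X k + (2 * Cf / A') * g k) :=
    (hXsum.mul_left ε').add (hgsum.mul_left _)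
  have habs_sum : Summable (fun k : ℤ => |χ (Real.exp (-(k:ℝ)) * u₀) * (f x - I k)|) :=
    Summable.of_nonneg_of_le (fun k => abs_nonneg _) hkey hrhs_sum
  have h1 : Summable (fun k : ℤ => χ (Real.exp (-(k:ℝ)) * u₀) * (f x - I k)) :=
    habs_sum.of_abs
  have hpart : HasSum (fun k : ℤ => χ (Real.exp (-(k:ℝ)) * u₀)) 1 := hχ.partition u₀ hu₀
  have hfx : HasSum (fun k : ℤ => χ (Real.exp (-(k:ℝ)) * u₀) * f x) (f x) := by
    simpa using hpart.mul_right (f x)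
  have h2 : Summable (fun k : ℤ => χ (Real.exp (-(k:ℝ)) * u₀) * f x) := hfx.summable
  have hterm_sum : Summable (fun k : ℤ => χ (Real.exp (-(k:ℝ)) * u₀) * I k) :=
    (h2.sub h1).congr (fun k => by ring)
  have hk : kanto χ f w x = ∑' k : ℤ, χ (Real.exp (-(k:ℝ)) * u₀) * I k := by
    simp only [kanto, hI, hu₀def]
  have hdiff : f x - kanto χ f w x = ∑' k : ℤ, χ (Real.exp (-(k:ℝ)) * u₀) * (f x - I k) := by
    calc f x - kanto χ f w x
        = (∑' k : ℤ, χ (Real.exp (-(k:ℝ)) * u₀) * f x)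
          - ∑' k : ℤ, χ (Real.exp (-(k:ℝ)) * u₀) * I k := by rw [hfx.tsum_eq, hk]
      _ = ∑' k : ℤ, (χ (Real.exp (-(k:ℝ)) * u₀) * f x - χ (Real.exp (-(k:ℝ)) * u₀) * I k) :=
          (Summable.tsum_sub h2 hterm_sum).symm
      _ = ∑' k : ℤ, χ (Real.exp (-(k:ℝ)) * u₀) * (f x - I k) :=
          tsum_congr fun k => (mul_sub _ _ _).symm
  have habs : |f x - kanto χ f w x| ≤ ∑' k : ℤ, |χ (Real.exp (-(k:ℝ)) * u₀) * (f x - I k)| := by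
    rw [hdiff]
    simpa [Real.norm_eq_abs, abs_mul] using
      norm_tsum_le_tsum_norm (E := ℝ)
        (f := fun k : ℤ => χ (Real.exp (-(k:ℝ)) * u₀) * (f x - I k))
        (by simpa [Real.norm_eq_abs, abs_mul] using habs_sum)
  have hbound : ∑' k : ℤ, |χ (Real.exp (-(k:ℝ)) * u₀) * (f x - I k)|
      ≤ ε' * (∑' k, X k) + (2 * Cf / A') * ∑' k, g k := by
    calc ∑' k : ℤ, |χ (Real.exp (-(k:ℝ)) * u₀) * (f x - I k)|
        ≤ ∑' k : ℤ, (ε' * X k + (2 * Cf / A') * g k) := Summable.tsum_le_tsum hkey habs_sum hrhs_sum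
      _ = ε' * (∑' k, X k) + (2 * Cf / A') * ∑' k, g k := by
          rw [Summable.tsum_add (hXsum.mul_left ε') (hgsum.mul_left _), tsum_mul_left, tsum_mul_left]
  have hXnn : 0 ≤ ∑' k, X k := tsum_nonneg (fun k => abs_nonneg _)
  have hfinal1 : ε' * (∑' k, X k) ≤ ε / 2 := by
    have h3 : ε' * (∑' k, X k) ≤ ε' * M₀ := mul_le_mul_of_nonneg_left hXle hε'.le
    have h4 : ε' * M₀ ≤ ε / 2 := by
      rw [hε'def, div_mul_eq_mul_div, div_le_div_iff₀ (by positivity) two_pos]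
      nlinarith [mul_nonneg hε.le hM₀0]
    exact h3.trans h4
  have hfinal2 : (2 * Cf / A') * (∑' k, g k) ≤ ε / 2 := by
    have h5 : (2 * Cf / A') * (∑' k, g k) ≤ (2 * Cf / A') * Mν :=
      mul_le_mul_of_nonneg_left hgle (by positivity)
    have e6 : 2 * (2 * Cf * Mν + 1) / ε ≤ A := le_max_left _ _
    have e8 : 2 * (2 * Cf * Mν + 1) ≤ ε * A' := by
      have := mul_le_mul_of_nonneg_left e6 hε.le
      rw [mul_div_cancel₀ _ hε.ne'] at this
      have h7 : ε * A ≤ ε * A' := mul_le_mul_of_nonneg_left hAA' hε.le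
      linarith
    have h6 : (2 * Cf / A') * Mν ≤ ε / 2 := by
      rw [div_mul_eq_mul_div, div_le_div_iff₀ hA'pos two_pos]
      linarith [e8]
    exact h5.trans h6
  linarith [habs.trans hbound]
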